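/- arXiv:1103.0041 — 5 statements merged into one kernel-verified Lean document; each statement's English description precedes it below -/
import Mathlib

section
/- Let m ≥ 1 and k ≥ 1 be integers, let S : Finset (Fin m) with |S| ≤ k, and let x : Fin m → ℝ be the indicator vector of S (x j = 1 if j ∈ S and x j = 0 otherwise). Then for every j ∈ S, the probability that j is included in the output of the k-draw lottery equals 1 − (1 − 1/k)^k, and this quantity is at least 1 − 1/e (where e = Real.exp 1). -/
open Finset

/-- Per-draw weights: project `j` is drawn with probability `x j / k`, and
`none` (no project) with the remaining probability `1 - (∑ j, x j)/k`. -/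
noncomputable def lotW {m : ℕ} (k : ℕ) (x : Fin m → ℝ) : Option (Fin m) → ℝ
  | some j => x j / k
  | none => 1 - (∑ j, x j) / k

/-- Probability of a particular draw function `f : Fin t → Option (Fin m)`,
with per-draw weights determined by `k` and `x`. -/
noncomputable def lotP {m : ℕ} (k t : ℕ) (x : Fin m → ℝ)
    (f : Fin t → Option (Fin m)) : ℝ :=
  ∏ s, lotW k x (f s)

/-- The set of projects chosen by a draw function `f`. -/
def lotProj {m t : ℕ} (f : Fin t → Option (Fin m)) : Finset (Fin m) :=
  Finset.univ.filter (fun j => ∃ s, f s = some j)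

theorem stmt3 (m k : ℕ) (hm : 1 ≤ m) (hk : 1 ≤ k) (S : Finset (Fin m))
    (hS : S.card ≤ k) (x : Fin m → ℝ)
    (hx : x = fun j => if j ∈ S then (1 : ℝ) else 0)
    (j : Fin m) (hj : j ∈ S) :
    (∑ f ∈ Finset.univ.filter (fun f : Fin k → Option (Fin m) => j ∈ lotProj f),
        lotP k k x f
      = 1 - (1 - 1 / (k : ℝ)) ^ k)
    ∧ 1 - 1 / Real.exp 1 ≤ 1 - (1 - 1 / (k : ℝ)) ^ k := by
  have hk0 : (k : ℝ) ≠ 0 := Nat.cast_ne_zero.mpr (by omega)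
  have hxj : x j = 1 := by simp [hx, hj]
  -- total sum of weights is 1
  have htot : ∑ o : Option (Fin m), lotW k x o = 1 := by
    rw [Fintype.sum_option]
    simp [lotW, ← Finset.sum_div]
  -- sum over all f of lotP = 1
  have hall : ∑ f : Fin k → Option (Fin m), lotP k k x f = 1 := by
    have := Finset.prod_univ_sum (fun _ : Fin k => (Finset.univ : Finset (Option (Fin m))))
      (fun _ o => lotW k x o)
    rw [Fintype.piFinset_univ] at this
    simp only [lotP]
    rw [← this]
    simp [htot]
  -- complement sum
  have herase : ∑ o ∈ Finset.univ.erase (some j), lotW k x o = 1 - 1 / (k : ℝ) := by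
    rw [Finset.sum_erase_eq_sub (Finset.mem_univ _), htot]
    simp [lotW, hxj]
  have hfilt : (Finset.univ.filter (fun f : Fin k → Option (Fin m) => ¬ j ∈ lotProj f))
      = Fintype.piFinset (fun _ : Fin k => Finset.univ.erase (some j)) := by
    ext f
    simp [lotProj, Fintype.mem_piFinset, eq_comm]
  have hcomp : ∑ f ∈ Finset.univ.filter (fun f : Fin k → Option (Fin m) => ¬ j ∈ lotProj f),
      lotP k k x f = (1 - 1 / (k : ℝ)) ^ k := by
    rw [hfilt]
    simp only [lotP]
    rw [← Finset.prod_univ_sum]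
    simp [herase]
  have hsplit := Finset.sum_filter_add_sum_filter_not Finset.univ
    (fun f : Fin k → Option (Fin m) => j ∈ lotProj f) (lotP k k x)
  rw [hall] at hsplit
  constructor
  · linarith [hcomp]
  · have h1 : (1 - 1 / (k : ℝ)) ^ k ≤ 1 / Real.exp 1 := by
      have hle : 1 - 1 / (k : ℝ) ≤ Real.exp (-(1 / k)) := by
        have := Real.add_one_le_exp (-(1 / (k : ℝ)))
        linarith
      have h0 : (0 : ℝ) ≤ 1 - 1 / k := by
        have : (1 : ℝ) ≤ (k : ℝ) := by exact_mod_cast hk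
        have : 1 / (k : ℝ) ≤ 1 := by
          rw [div_le_one (by linarith)]; linarith
        linarith
      calc (1 - 1 / (k : ℝ)) ^ k ≤ (Real.exp (-(1 / k))) ^ k :=
            pow_le_pow_left₀ h0 hle k
        _ = Real.exp ((k : ℝ) * (-(1 / k))) := by rw [← Real.exp_nat_mul]
        _ = Real.exp (-1) := by rw [mul_neg, mul_one_div, div_self hk0]
        _ = 1 / Real.exp 1 := by rw [Real.exp_neg, inv_eq_one_div]
    linarith
end

section
/- Let m ≥ 1 and k ≥ 1 be integers and let v : Finset (Fin m) → ℝ be normalized (v ∅ = 0), monotone (v A ≤ v B whenever A ⊆ B), and submodular (v A + v B ≥ v (A ∪ B) + v (A ∩ B) for all A, B). Let S : Finset (Fin m) with |S| ≤ k, and let x be the indicator vector of S. Then the expected value of v under the k-draw lottery satisfies G_k^v(x) ≥ (1 − 1/e) · v(S), where e = Real.exp 1. (The k-bounded-lottery rounding scheme is (1−1/e)-approximate for submodular valuations.) -/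
open Finset

/-- Expected value of the set function `v` under the `k`-bounded-lottery
rounding scheme `r_k` applied to `x`. -/
noncomputable def lotG {m : ℕ} (k : ℕ) (v : Finset (Fin m) → ℝ)
    (x : Fin m → ℝ) : ℝ :=
  ∑ f : Fin k → Option (Fin m), lotP k k x f * v (lotProj f)

/-!
Let `E t` be the expected value of `v` on the set of projects picked after `t` draws. A single draw
from a set `A` already held adds a uniformly chosen element of `S` with probability `|S|/k`, and by
submodularity the marginal gains `v (A ∪ {j}) - v A`, `j ∈ S`, sum to at least
`v (A ∪ S) - v A ≥ v S - v A`. Hence every draw closes a `1/k` fraction of the gap: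
`v S - E (t+1) ≤ (1 - 1/k) (v S - E t)`, so after `k` draws the gap is at most
`(1 - 1/k)^k v S ≤ v S / e`.
-/

lemma sub_le_sum_insert_sub {α : Type*} [DecidableEq α] (v : Finset α → ℝ)
    (hsub : ∀ A B : Finset α, v (A ∪ B) + v (A ∩ B) ≤ v A + v B) (A S : Finset α) :
    v (A ∪ S) - v A ≤ ∑ j ∈ S, (v (insert j A) - v A) := by
  induction S using Finset.induction with
  | empty => simp
  | insert j S hj ih =>
    have hunion : insert j A ∪ (A ∪ S) = A ∪ insert j S := by
      ext a; simp only [mem_insert, mem_union]; tauto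
    have hinter : insert j A ∩ (A ∪ S) = A := by
      ext a
      simp only [mem_inter, mem_insert, mem_union]
      constructor
      · rintro ⟨rfl | ha, ha' | ha'⟩ <;> first | assumption | exact absurd ha' hj
      · exact fun ha => ⟨Or.inr ha, Or.inl ha⟩
    have := hsub (insert j A) (A ∪ S)
    rw [hunion, hinter] at this
    rw [sum_insert hj]
    linarith

lemma Fintype.sum_fun_fin_succ {β : Type*} [Fintype β] {t : ℕ}
    (F : (Fin (t + 1) → β) → ℝ) :
    ∑ f, F f = ∑ a : β, ∑ g : Fin t → β, F (Fin.cons a g) := by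
  rw [← (Fin.consEquiv fun _ => β).sum_comp F, Fintype.sum_prod_type]
  rfl

section Lottery

variable {m : ℕ} (k : ℕ) (x : Fin m → ℝ)

lemma lotP_cons {t : ℕ} (a : Option (Fin m)) (g : Fin t → Option (Fin m)) :
    lotP k (t + 1) x (Fin.cons a g) = lotW k x a * lotP k t x g := by
  simp [lotP, Fin.prod_univ_succ]

@[simp]
lemma lotProj_cons_none {t : ℕ} (g : Fin t → Option (Fin m)) :
    lotProj (Fin.cons none g) = lotProj g := by
  ext j
  simp [lotProj, Fin.exists_fin_succ]

@[simp]
lemma lotProj_cons_some {t : ℕ} (i : Fin m) (g : Fin t → Option (Fin m)) :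
    lotProj (Fin.cons (some i) g) = insert i (lotProj g) := by
  ext j
  simp [lotProj, Fin.exists_fin_succ, eq_comm]

lemma sum_lotW : ∑ a, lotW k x a = 1 := by
  simp only [Fintype.sum_option, lotW, ← sum_div]
  ring

lemma sum_lotP (t : ℕ) : ∑ g : Fin t → Option (Fin m), lotP k t x g = 1 := by
  induction t with
  | zero => simp [lotP]
  | succ t ih =>
    simp only [Fintype.sum_fun_fin_succ, lotP_cons, ← mul_sum, ih, mul_one, sum_lotW]

lemma lotW_nonneg (hx0 : ∀ j, 0 ≤ x j) (hxk : ∑ j, x j ≤ k) (a : Option (Fin m)) :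
    0 ≤ lotW k x a := by
  cases a with
  | none => simpa [lotW] using div_le_one_of_le₀ hxk k.cast_nonneg
  | some j => exact div_nonneg (hx0 j) k.cast_nonneg

lemma lotP_nonneg (hx0 : ∀ j, 0 ≤ x j) (hxk : ∑ j, x j ≤ k) {t : ℕ}
    (g : Fin t → Option (Fin m)) : 0 ≤ lotP k t x g :=
  prod_nonneg fun s _ => lotW_nonneg k x hx0 hxk (g s)

noncomputable def lotE (t : ℕ) (v : Finset (Fin m) → ℝ) : ℝ :=
  ∑ f : Fin t → Option (Fin m), lotP k t x f * v (lotProj f)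

variable (v : Finset (Fin m) → ℝ)

lemma lotG_eq_lotE : lotG k v x = lotE k x k v := rfl

lemma lotE_zero : lotE k x 0 v = v ∅ := by
  simp [lotE, lotP, lotProj]

noncomputable def lotStep (A : Finset (Fin m)) : ℝ :=
  lotW k x none * v A + ∑ j, lotW k x (some j) * v (insert j A)

lemma lotE_succ (t : ℕ) :
    lotE k x (t + 1) v =
      ∑ g : Fin t → Option (Fin m), lotP k t x g * lotStep k x v (lotProj g) := by
  simp only [lotE, lotStep, Fintype.sum_fun_fin_succ, lotP_cons, Fintype.sum_option,
    lotProj_cons_none, lotProj_cons_some, sum_add_distrib, mul_add, mul_sum]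
  rw [sum_comm]
  congr 1 <;> refine sum_congr rfl fun _ _ => ?_
  · ring
  · exact sum_congr rfl fun _ _ => by ring

end Lottery

section Indicator

variable {m : ℕ} (k : ℕ) (v : Finset (Fin m) → ℝ) (S : Finset (Fin m))

def indicatorVec : Fin m → ℝ := fun j => if j ∈ S then 1 else 0

lemma lotStep_indicator (A : Finset (Fin m)) :
    lotStep k (indicatorVec S) v A = v A + (∑ j ∈ S, (v (insert j A) - v A)) / k := by
  simp only [lotStep, lotW, indicatorVec, ite_div, ite_mul, zero_div, zero_mul, sum_ite_mem,
    univ_inter, sum_sub_distrib, sum_const, nsmul_eq_mul, ← mul_sum]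
  ring

lemma lotStep_indicator_ge (hmono : ∀ A B : Finset (Fin m), A ⊆ B → v A ≤ v B)
    (hsub : ∀ A B : Finset (Fin m), v (A ∪ B) + v (A ∩ B) ≤ v A + v B)
    (A : Finset (Fin m)) :
    (1 - 1 / k) * v A + v S / k ≤ lotStep k (indicatorVec S) v A := by
  have hgain : v S - v A ≤ ∑ j ∈ S, (v (insert j A) - v A) :=
    (sub_le_sub_right (hmono _ _ subset_union_right) _).trans (sub_le_sum_insert_sub v hsub A S)
  calc (1 - 1 / k) * v A + v S / k = v A + (v S - v A) / k := by ring
    _ ≤ lotStep k (indicatorVec S) v A := by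
      rw [lotStep_indicator]
      gcongr

lemma lotE_succ_indicator_ge (hmono : ∀ A B : Finset (Fin m), A ⊆ B → v A ≤ v B)
    (hsub : ∀ A B : Finset (Fin m), v (A ∪ B) + v (A ∩ B) ≤ v A + v B) (hS : S.card ≤ k)
    (t : ℕ) :
    (1 - 1 / k) * lotE k (indicatorVec S) t v + v S / k ≤ lotE k (indicatorVec S) (t + 1) v := by
  have hx0 : ∀ j, 0 ≤ indicatorVec S j := fun j => by unfold indicatorVec; positivity
  have hxk : ∑ j, indicatorVec S j ≤ k := by simpa [indicatorVec] using hS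
  calc (1 - 1 / k) * lotE k (indicatorVec S) t v + v S / k
      = ∑ g : Fin t → Option (Fin m),
          lotP k t (indicatorVec S) g * ((1 - 1 / k) * v (lotProj g) + v S / k) := by
        simp only [lotE, mul_add, sum_add_distrib, mul_sum, ← sum_mul, sum_lotP]
        congr 1
        · exact sum_congr rfl fun _ _ => by ring
        · ring
    _ ≤ lotE k (indicatorVec S) (t + 1) v := by
      rw [lotE_succ]
      gcongr with g
      · exact lotP_nonneg k _ hx0 hxk g
      · exact lotStep_indicator_ge k v S hmono hsub _

lemma sub_lotE_indicator_le (hmono : ∀ A B : Finset (Fin m), A ⊆ B → v A ≤ v B)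
    (hsub : ∀ A B : Finset (Fin m), v (A ∪ B) + v (A ∩ B) ≤ v A + v B) (hS : S.card ≤ k)
    (t : ℕ) :
    v S - lotE k (indicatorVec S) t v ≤ (1 - 1 / k) ^ t * (v S - v ∅) := by
  induction t with
  | zero => simp [lotE_zero]
  | succ t ih =>
    have : 0 ≤ 1 - 1 / (k : ℝ) := by simpa using Nat.cast_inv_le_one k
    calc v S - lotE k (indicatorVec S) (t + 1) v
        ≤ v S - ((1 - 1 / k) * lotE k (indicatorVec S) t v + v S / k) := by
          linarith [lotE_succ_indicator_ge k v S hmono hsub hS t]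
      _ = (1 - 1 / k) * (v S - lotE k (indicatorVec S) t v) := by ring
      _ ≤ (1 - 1 / k) * ((1 - 1 / k) ^ t * (v S - v ∅)) := by gcongr
      _ = (1 - 1 / k) ^ (t + 1) * (v S - v ∅) := by ring

end Indicator

theorem stmt4_general (m k : ℕ) (hk : 1 ≤ k) (v : Finset (Fin m) → ℝ)
    (hnorm : v ∅ = 0)
    (hmono : ∀ A B : Finset (Fin m), A ⊆ B → v A ≤ v B)
    (hsub : ∀ A B : Finset (Fin m), v (A ∪ B) + v (A ∩ B) ≤ v A + v B)
    (S : Finset (Fin m)) (hS : S.card ≤ k) (x : Fin m → ℝ)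
    (hx : x = fun j => if j ∈ S then (1 : ℝ) else 0) :
    (1 - 1 / Real.exp 1) * v S ≤ lotG k v x := by
  obtain rfl : x = indicatorVec S := hx
  have hgap : v S - lotG k v (indicatorVec S) ≤ (1 - 1 / k) ^ k * v S := by
    simpa [lotG_eq_lotE, hnorm] using sub_lotE_indicator_le k v S hmono hsub hS k
  have hdecay : (1 - 1 / k : ℝ) ^ k ≤ 1 / Real.exp 1 := by
    simpa [Real.exp_neg] using
      Real.one_sub_div_pow_le_exp_neg (n := k) (t := 1) (by exact_mod_cast hk)
  have hvS : 0 ≤ v S := hnorm ▸ hmono ∅ S (empty_subset S)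
  linarith [mul_le_mul_of_nonneg_right hdecay hvS]

theorem stmt4 (m k : ℕ) (hm : 1 ≤ m) (hk : 1 ≤ k) (v : Finset (Fin m) → ℝ)
    (hnorm : v ∅ = 0)
    (hmono : ∀ A B : Finset (Fin m), A ⊆ B → v A ≤ v B)
    (hsub : ∀ A B : Finset (Fin m), v (A ∪ B) + v (A ∩ B) ≤ v A + v B)
    (S : Finset (Fin m)) (hS : S.card ≤ k) (x : Fin m → ℝ)
    (hx : x = fun j => if j ∈ S then (1 : ℝ) else 0) :
    (1 - 1 / Real.exp 1) * v S ≤ lotG k v x :=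
  stmt4_general m k hk v hnorm hmono hsub S hS x hx
end

section
/- Let M be a matroid on Fin m whose ground set is all of Fin m, and let rk_M(S) denote the rank of S in M (the maximum cardinality of an independent subset of S). Then for every S : Finset (Fin m), the discrete Hessian matrix H^{rk_M}_S is negative semi-definite: for every y : Fin m → ℝ, ∑_{i : Fin m} ∑_{j : Fin m} y i · y j · H^{rk_M}_S(i,j) ≤ 0. -/
/-!
Write `r` for the rank function. Each of `r (S ∪ {i})`, `r (S ∪ {j})` exceeds `r S` by `0` or `1`,
and submodularity then forces `H_S(i, j) = -1` when `i`, `j` are parallel non-loops of `M ／ S`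
and `H_S(i, j) = 0` otherwise. Parallelism is a partial equivalence relation (transitivity is
submodularity once more), so `-H_S` is the sum of the matrices `1_C 1_Cᵀ` over the parallel
classes `C`, and is positive semidefinite.
-/

open Finset

open Classical in
/-- The rank of the finite set `S` in the matroid `M`: the maximum cardinality
of an independent subset of `S`. -/
noncomputable def matFinRank {m : ℕ} (M : Matroid (Fin m)) (S : Finset (Fin m)) : ℕ :=
  (S.powerset.filter
    (fun I : Finset (Fin m) => M.Indep (↑I : Set (Fin m)))).sup Finset.card

/-- The discrete Hessian matrix of the set function `v` at the set `S`. -/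
def dHess {m : ℕ} (v : Finset (Fin m) → ℝ) (S : Finset (Fin m)) (i j : Fin m) : ℝ :=
  v (S ∪ {i, j}) - v (S ∪ {i}) - v (S ∪ {j}) + v S

section

variable {ι κ : Type*}

theorem sum_sum_ite_apply_eq_mul_nonneg [DecidableEq κ] (s : Finset ι) (φ : ι → κ)
    (y : ι → ℝ) : 0 ≤ ∑ i ∈ s, ∑ j ∈ s, if φ i = φ j then y i * y j else 0 := by
  have hfiber : ∀ i ∈ s, ∑ j ∈ s, (if φ i = φ j then y i * y j else 0) =
      y i * ∑ j ∈ s with φ j = φ i, y j := by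
    intro i _
    rw [sum_filter, mul_sum]
    exact sum_congr rfl fun j _ => by rw [mul_ite, mul_zero]; exact if_congr eq_comm rfl rfl
  rw [sum_congr rfl hfiber, ← sum_fiberwise_of_maps_to fun i hi => mem_image_of_mem φ hi]
  refine sum_nonneg fun k _ => ?_
  rw [sum_congr rfl fun i hi => by rw [(mem_filter.1 hi).2], ← sum_mul]
  exact mul_self_nonneg _

theorem sum_sum_ite_rel_mul_nonneg [Fintype ι] [DecidableEq ι] {R : ι → ι → Prop}
    [DecidableRel R] (hsymm : ∀ ⦃i j⦄, R i j → R j i)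
    (htrans : ∀ ⦃i j k⦄, R i j → R j k → R i k) (y : ι → ℝ) :
    0 ≤ ∑ i, ∑ j, if R i j then y i * y j else 0 := by
  set cls : ι → Finset ι := fun i => univ.filter (R i)
  have hR : ∀ i j, R i j ↔ R i i ∧ R j j ∧ cls i = cls j := by
    refine fun i j => ⟨fun hij => ⟨htrans hij (hsymm hij),
      htrans (hsymm hij) hij, ?_⟩, fun ⟨_, hj, hcls⟩ => ?_⟩
    · ext k
      simp only [cls, mem_filter, mem_univ, true_and]
      exact ⟨htrans (hsymm hij), htrans hij⟩
    · simpa [cls, hj] using congrArg (j ∈ ·) hcls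
  refine (sum_sum_ite_apply_eq_mul_nonneg (univ.filter fun i => R i i) cls y).trans_eq ?_
  rw [sum_filter]
  refine sum_congr rfl fun i _ => ?_
  split_ifs with hi
  · rw [sum_filter]
    refine sum_congr rfl fun j _ => ?_
    simp only [hR i j, hi, true_and, ite_and]
  · exact (sum_eq_zero fun j _ => if_neg fun hij => hi ((hR i j).1 hij).1).symm

end

section

variable {α : Type*} [DecidableEq α]

structure IsUnitIncreasingSubmodular (r : Finset α → ℕ) : Prop where
  mono : Monotone r
  union_add_inter_le : ∀ A B, r (A ∪ B) + r (A ∩ B) ≤ r A + r B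
  union_singleton_le : ∀ A a, r (A ∪ {a}) ≤ r A + 1

/-- `i` and `j` are parallel non-loops of the contraction `M ／ S`, where `r` is the rank
function of `M`. -/
def ParallelOver (r : Finset α → ℕ) (S : Finset α) (i j : α) : Prop :=
  r (S ∪ {i}) = r S + 1 ∧ r (S ∪ {j}) = r S + 1 ∧ r (S ∪ {i, j}) = r S + 1

instance (r : Finset α → ℕ) (S : Finset α) : DecidableRel (ParallelOver r S) :=
  fun _ _ => inferInstanceAs (Decidable (_ ∧ _ ∧ _))

theorem ParallelOver.symm {r : Finset α → ℕ} {S : Finset α} {i j : α}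
    (h : ParallelOver r S i j) : ParallelOver r S j i := by
  obtain ⟨hi, hj, hij⟩ := h
  exact ⟨hj, hi, pair_comm i j ▸ hij⟩

namespace IsUnitIncreasingSubmodular

variable {r : Finset α → ℕ}

/-- The Hessian entry `H_S(i, j) = -[i ∥ j]`, stated without subtraction. -/
theorem add_ite_parallelOver (hr : IsUnitIncreasingSubmodular r) (S : Finset α) (i j : α) :
    r (S ∪ {i, j}) + r S + (if ParallelOver r S i j then 1 else 0) =
      r (S ∪ {i}) + r (S ∪ {j}) := by
  have hi := hr.union_singleton_le S i
  have hj := hr.union_singleton_le S j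
  have hSi := hr.mono (show S ⊆ S ∪ {i} from subset_union_left)
  have hSj := hr.mono (show S ⊆ S ∪ {j} from subset_union_left)
  have hij := hr.mono (show S ∪ {i} ⊆ S ∪ {i, j} by grind)
  have hji := hr.mono (show S ∪ {j} ⊆ S ∪ {i, j} by grind)
  rcases eq_or_ne i j with rfl | hne
  · have hdiag : r (S ∪ {i, i}) = r (S ∪ {i}) := by rw [pair_eq_singleton]
    split_ifs with h <;> unfold ParallelOver at h <;> omega
  · have hsubmod := hr.union_add_inter_le (S ∪ {i}) (S ∪ {j})
    rw [show S ∪ {i} ∪ (S ∪ {j}) = S ∪ {i, j} by grind,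
      show (S ∪ {i}) ∩ (S ∪ {j}) = S by grind] at hsubmod
    split_ifs with h <;> unfold ParallelOver at h <;> omega

theorem parallelOver_trans (hr : IsUnitIncreasingSubmodular r) (S : Finset α) {i j k : α}
    (hij : ParallelOver r S i j) (hjk : ParallelOver r S j k) : ParallelOver r S i k := by
  obtain ⟨hi, hj, hij⟩ := hij
  obtain ⟨-, hk, hjk⟩ := hjk
  refine ⟨hi, hk, le_antisymm ?_ ?_⟩
  · -- submodularity on `S ∪ {i, j}` and `S ∪ {j, k}`, whose intersection contains `S ∪ {j}`
    have hsubmod := hr.union_add_inter_le (S ∪ {i, j}) (S ∪ {j, k})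
    have hunion := hr.mono (show S ∪ {i, k} ⊆ S ∪ {i, j} ∪ (S ∪ {j, k}) by grind)
    have hinter := hr.mono (show S ∪ {j} ⊆ (S ∪ {i, j}) ∩ (S ∪ {j, k}) by grind)
    omega
  · exact hi ▸ hr.mono (show S ∪ {i} ⊆ S ∪ {i, k} by grind)

end IsUnitIncreasingSubmodular

end

theorem matFinRank_eq_eRk {m : ℕ} (M : Matroid (Fin m)) (T : Finset (Fin m)) :
    (matFinRank M T : ℕ∞) = M.eRk T := by
  classical
  refine le_antisymm ?_ (Matroid.eRk_le_iff.2 fun I hIT hI => ?_)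
  · rw [matFinRank]
    obtain ⟨I, hI, hsup⟩ := exists_mem_eq_sup (T.powerset.filter fun I : Finset (Fin m) =>
      M.Indep (I : Set (Fin m))) ⟨∅, by simp⟩ card
    rw [mem_filter, mem_powerset] at hI
    rw [hsup, ← Set.encard_coe_eq_coe_finsetCard]
    exact hI.2.encard_le_eRk_of_subset (coe_subset.2 hI.1)
  · lift I to Finset (Fin m) using T.finite_toSet.subset hIT
    rw [Set.encard_coe_eq_coe_finsetCard, Nat.cast_le]
    exact le_sup (mem_filter.2 ⟨mem_powerset.2 (coe_subset.1 hIT), hI⟩)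

theorem isUnitIncreasingSubmodular_matFinRank {m : ℕ} (M : Matroid (Fin m)) :
    IsUnitIncreasingSubmodular (matFinRank M) where
  mono A B h := by
    rw [← Nat.cast_le (α := ℕ∞), matFinRank_eq_eRk, matFinRank_eq_eRk]
    exact M.eRk_mono (coe_subset.2 h)
  union_add_inter_le A B := by
    rw [← Nat.cast_le (α := ℕ∞), Nat.cast_add, Nat.cast_add, matFinRank_eq_eRk, matFinRank_eq_eRk,
      matFinRank_eq_eRk, matFinRank_eq_eRk, coe_union, coe_inter, add_comm]
    exact M.eRk_inter_add_eRk_union_le A B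
  union_singleton_le A a := by
    rw [← Nat.cast_le (α := ℕ∞), Nat.cast_add, Nat.cast_one, matFinRank_eq_eRk, matFinRank_eq_eRk,
      union_singleton, coe_insert]
    exact M.eRk_insert_le_add_one a A

theorem stmt7_general (m : ℕ) (M : Matroid (Fin m))
    (S : Finset (Fin m)) (y : Fin m → ℝ) :
    ∑ i : Fin m, ∑ j : Fin m,
      y i * y j * dHess (fun T => (matFinRank M T : ℝ)) S i j ≤ 0 := by
  have hr := isUnitIncreasingSubmodular_matFinRank M
  have hentry : ∀ i j, dHess (fun T => (matFinRank M T : ℝ)) S i j =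
      -if ParallelOver (matFinRank M) S i j then 1 else 0 := fun i j => by
    have h := congrArg (Nat.cast : ℕ → ℝ) (hr.add_ite_parallelOver S i j)
    push_cast at h
    unfold dHess
    linarith
  have hclasses := sum_sum_ite_rel_mul_nonneg (R := ParallelOver (matFinRank M) S)
    (fun _ _ h => h.symm) (fun _ _ _ => hr.parallelOver_trans S) y
  simpa only [hentry, mul_neg, mul_ite, mul_one, mul_zero, sum_neg_distrib, neg_nonpos]
    using hclasses

theorem stmt7 (m : ℕ) (M : Matroid (Fin m)) (hM : M.E = Set.univ)
    (S : Finset (Fin m)) (y : Fin m → ℝ) :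
    ∑ i : Fin m, ∑ j : Fin m,
      y i * y j * dHess (fun T => (matFinRank M T : ℝ)) S i j ≤ 0 :=
  stmt7_general m M S y
end

section
/- Let m ≥ 1 and k ≥ 1 be integers, let v : Finset (Fin m) → ℝ be any set function, and regard G_k^v as a polynomial function of x : Fin m → ℝ. Then for every x : Fin m → ℝ and every j : Fin m, the partial derivative of G_k^v with respect to the coordinate x_j at x equals ∑_{S : Finset (Fin m)} Pr_{k−1}(x)(S) · (v(S ∪ {j}) − v(S)), where Pr_{k−1}(x)(S) = ∑ over f : Fin (k−1) → Option (Fin m) with proj(f) = S of ∏_{s} w_x(f s) is the (k−1)-draw lottery probability with the same per-draw weights w_x. -/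
open Finset

/-- Partial derivative of `F : (Fin m → ℝ) → ℝ` with respect to coordinate `j`,
taken via `deriv` along coordinate updates. -/
noncomputable def pd {m : ℕ} (j : Fin m) (F : (Fin m → ℝ) → ℝ)
    (x : Fin m → ℝ) : ℝ :=
  deriv (fun t => F (Function.update x j t)) (x j)

/-! Each weight `lotW k x c` is affine in `x j`, with slope `1/k` at `c = some j`, `-1/k` at
`c = none` and `0` otherwise. By the product rule the derivative of `lotG k v` is a sum over the
`k` draws. Splitting a draw function into its value `c` at the differentiated draw and the other
`k - 1` draws, the slopes summed over `c` leave `(v (insert j S) - v S) / k`, weighted by the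
`(k - 1)`-draw probability of `S`. All `k` draws contribute equally, which cancels the `1/k`. -/

lemma prod_erase_insertNth {M α : Type*} [CommMonoid M] {n : ℕ} (s : Fin (n + 1)) (y : α)
    (g : Fin n → α) (w : α → M) :
    ∏ s' ∈ univ.erase s, w (Fin.insertNth (α := fun _ => α) s y g s') = ∏ i, w (g i) := by
  rw [← compl_singleton, ← Fin.image_succAbove_univ,
    prod_image Fin.succAbove_right_injective.injOn]
  simp only [Fin.insertNth_apply_succAbove]

lemma sum_univ_pi_insertNth {M α : Type*} [AddCommMonoid M] [Fintype α] {n : ℕ}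
    (s : Fin (n + 1)) (F : (Fin (n + 1) → α) → M) :
    ∑ f, F f = ∑ y, ∑ g, F (Fin.insertNth (α := fun _ => α) s y g) := by
  rw [← (Fin.insertNthEquiv (fun _ => α) s).sum_comp, Fintype.sum_prod_type]
  rfl

section

variable {m : ℕ}

lemma lotProj_insertNth {n : ℕ} (s : Fin (n + 1)) (y : Option (Fin m))
    (g : Fin n → Option (Fin m)) :
    lotProj (Fin.insertNth (α := fun _ => Option (Fin m)) s y g) = y.toFinset ∪ lotProj g := by
  ext c
  cases y <;>
    simp [lotProj, Fin.exists_iff_succAbove s, Fin.insertNth_apply_succAbove, eq_comm]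

noncomputable def lotWDeriv (k : ℕ) (j : Fin m) : Option (Fin m) → ℝ
  | some i => if i = j then (k : ℝ)⁻¹ else 0
  | none => -(k : ℝ)⁻¹

lemma hasDerivAt_lotW_update (k : ℕ) (x : Fin m → ℝ) (j : Fin m) (c : Option (Fin m)) :
    HasDerivAt (fun t => lotW k (Function.update x j t) c) (lotWDeriv k j c) (x j) := by
  rcases c with _ | i
  · have hsum (t : ℝ) : ∑ i, Function.update x j t i = t + ∑ i ∈ univ.erase j, x i := by
      rw [sum_update_of_mem (mem_univ j), sdiff_singleton_eq_erase]
    simp only [lotW, lotWDeriv, hsum]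
    simpa [div_eq_mul_inv] using
      (((hasDerivAt_id (x j)).add_const _).div_const (k : ℝ)).const_sub 1
  · by_cases h : i = j
    · subst h
      simpa [lotW, lotWDeriv, div_eq_mul_inv] using (hasDerivAt_id (x i)).div_const (k : ℝ)
    · simpa [lotW, lotWDeriv, Function.update_of_ne h, h] using hasDerivAt_const (x j) (x i / k)

lemma sum_lotWDeriv_mul (k : ℕ) (j : Fin m) (F : Option (Fin m) → ℝ) :
    ∑ c, lotWDeriv k j c * F c = (k : ℝ)⁻¹ * (F (some j) - F none) := by
  simp only [lotWDeriv, Fintype.sum_option, neg_mul, ite_mul, zero_mul, sum_ite_eq', mem_univ,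
    ↓reduceIte]
  ring

lemma hasDerivAt_lotP_update (k n : ℕ) (x : Fin m → ℝ) (j : Fin m)
    (f : Fin n → Option (Fin m)) :
    HasDerivAt (fun t => lotP k n (Function.update x j t) f)
      (∑ s, (∏ s' ∈ univ.erase s, lotW k x (f s')) * lotWDeriv k j (f s)) (x j) := by
  simpa [lotP, Function.update_eq_self] using
    HasDerivAt.fun_finsetProd (u := univ) fun s _ => hasDerivAt_lotW_update k x j (f s)

lemma hasDerivAt_lotG_update (k : ℕ) (v : Finset (Fin m) → ℝ) (x : Fin m → ℝ) (j : Fin m) :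
    HasDerivAt (fun t => lotG k v (Function.update x j t))
      (∑ s, ∑ f : Fin k → Option (Fin m),
        (∏ s' ∈ univ.erase s, lotW k x (f s')) * lotWDeriv k j (f s) * v (lotProj f)) (x j) := by
  rw [sum_comm]
  simp_rw [← sum_mul]
  exact HasDerivAt.fun_sum fun f _ => (hasDerivAt_lotP_update k k x j f).mul_const _

lemma sum_prod_erase_lotW_mul_lotWDeriv (k n : ℕ) (v : Finset (Fin m) → ℝ) (x : Fin m → ℝ)
    (j : Fin m) (s : Fin (n + 1)) :
    ∑ f : Fin (n + 1) → Option (Fin m),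
        (∏ s' ∈ univ.erase s, lotW k x (f s')) * lotWDeriv k j (f s) * v (lotProj f)
      = (k : ℝ)⁻¹ * ∑ g, lotP k n x g * (v (insert j (lotProj g)) - v (lotProj g)) := by
  rw [sum_univ_pi_insertNth s, sum_comm, mul_sum]
  refine sum_congr rfl fun g _ => ?_
  simp only [prod_erase_insertNth, Fin.insertNth_apply_same, lotProj_insertNth]
  simp_rw [mul_comm _ (lotWDeriv k j _), mul_assoc]
  rw [sum_lotWDeriv_mul]
  simp only [Option.toFinset_some, Option.toFinset_none, singleton_union, empty_union, lotP]
  ring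

lemma pd_lotG_succ (n : ℕ) (v : Finset (Fin m) → ℝ) (x : Fin m → ℝ) (j : Fin m) :
    pd j (lotG (n + 1) v) x
      = ∑ g, lotP (n + 1) n x g * (v (insert j (lotProj g)) - v (lotProj g)) := by
  rw [pd, (hasDerivAt_lotG_update (n + 1) v x j).deriv]
  simp_rw [sum_prod_erase_lotW_mul_lotWDeriv, sum_const, card_univ, Fintype.card_fin,
    nsmul_eq_mul, ← mul_assoc]
  rw [mul_inv_cancel₀ (by positivity), one_mul]

end

theorem stmt9_general (m k : ℕ) (hk : 1 ≤ k) (v : Finset (Fin m) → ℝ)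
    (x : Fin m → ℝ) (j : Fin m) :
    pd j (lotG k v) x
      = ∑ S : Finset (Fin m),
          (∑ f ∈ Finset.univ.filter
              (fun f : Fin (k - 1) → Option (Fin m) => lotProj f = S),
            lotP k (k - 1) x f) * (v (S ∪ {j}) - v S) := by
  obtain ⟨n, rfl⟩ := Nat.exists_eq_add_of_le' hk
  rw [Nat.add_sub_cancel]
  simp_rw [union_comm _ {j}, ← insert_eq, sum_mul]
  rw [pd_lotG_succ, ← sum_fiberwise univ lotProj]
  refine sum_congr rfl fun S _ => sum_congr rfl fun f hf => ?_
  rw [(mem_filter.1 hf).2]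

theorem stmt9 (m k : ℕ) (hm : 1 ≤ m) (hk : 1 ≤ k) (v : Finset (Fin m) → ℝ)
    (x : Fin m → ℝ) (j : Fin m) :
    pd j (lotG k v) x
      = ∑ S : Finset (Fin m),
          (∑ f ∈ Finset.univ.filter
              (fun f : Fin (k - 1) → Option (Fin m) => lotProj f = S),
            lotP k (k - 1) x f) * (v (S ∪ {j}) - v S) :=
  stmt9_general m k hk v x j
end

section
/- Let m ≥ 1 and k ≥ 2 be integers, let v : Finset (Fin m) → ℝ be any set function, and regard G_k^v as a polynomial function of x : Fin m → ℝ. Then for every x : Fin m → ℝ and all i, j : Fin m, the second-order partial derivative ∂²G_k^v/∂x_i∂x_j at x equals ((k−1)/k) · ∑_{S : Finset (Fin m)} (−1)^{|S|} · ∑_{R ⊆ S} (−1)^{|R|} · (1 − (∑_{j' ∉ R} x j')/k)^{k−2} · H^v_S(i,j). -/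
open Finset

/-!
A single draw lands in `R ∪ {none}` with probability `W_R = 1 - (∑ j ∉ R, x j) / k`, so all `k`
draws do with probability `W_R ^ k`. Möbius inversion on the subset lattice therefore writes
`G_k^v = ∑_R (-1)^|R| A_v(R) W_R ^ k` with `A_v(R) = ∑_{S ⊇ R} (-1)^|S| v S`. Each `W_R` is affine
with slope `-1/k` in the coordinates outside `R` and constant in those inside, so
`∂_i ∂_j W_R ^ k = [i, j ∉ R] ((k - 1) / k) W_R ^ (k - 2)`. On the other side, `S ↦ w (insert i S)`
has vanishing alternating sum above any `R ∌ i`, so `A` of the discrete Hessian is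
`[i, j ∉ R] A_v(R)`; exchanging the sums over `S` and `R ⊆ S` matches the two expressions.
-/

section Alternating

variable {α M : Type*} [DecidableEq α] [CommRing M]

lemma sum_Icc_neg_one_pow_card (A S : Finset α) :
    ∑ R ∈ Icc A S, (-1 : M) ^ #R = if A = S then (-1) ^ #A else 0 := by
  by_cases hAS : A ⊆ S
  · have hdisj : ∀ T ∈ (S \ A).powerset, Disjoint A T := fun T hT =>
      disjoint_of_subset_right (mem_powerset.mp hT) disjoint_sdiff
    rw [Icc_eq_image_powerset hAS, sum_image fun T hT U hU h => by
      rw [← union_sdiff_cancel_left (hdisj T hT), h, union_sdiff_cancel_left (hdisj U hU)]]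
    rw [sum_congr rfl fun T hT => by rw [card_union_of_disjoint (hdisj T hT), pow_add],
      ← mul_sum]
    have hpow := congrArg (Int.cast : ℤ → M) (sum_powerset_neg_one_pow_card (x := S \ A))
    push_cast at hpow
    simp only [hpow, sdiff_eq_empty_iff_subset, hAS.ge_iff_eq, mul_ite, mul_one, mul_zero]
  · rw [Icc_eq_empty (by simpa using hAS), sum_empty, if_neg (by rintro rfl; exact hAS le_rfl)]

variable [Fintype α]

def altSumAbove (w : Finset α → M) (R : Finset α) : M :=
  ∑ S with R ⊆ S, (-1) ^ #S * w S

lemma sum_neg_one_pow_card_mul_altSumAbove (w : Finset α → M) (A : Finset α) :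
    ∑ R with A ⊆ R, (-1) ^ #R * altSumAbove w R = w A := by
  simp only [altSumAbove, mul_sum]
  rw [sum_comm' (t' := univ) (s' := fun S => Icc A S) fun R S => by
    simp only [mem_filter, mem_univ, true_and, mem_Icc, and_true]]
  rw [sum_congr rfl fun S _ => by rw [← sum_mul, sum_Icc_neg_one_pow_card]]
  simp only [ite_mul, zero_mul, sum_ite_eq, mem_univ, if_true, ← mul_assoc, ← pow_add,
    Even.neg_one_pow ⟨_, rfl⟩, one_mul]

lemma altSumAbove_insert {R : Finset α} {i : α} (hi : i ∉ R) (w : Finset α → M) :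
    altSumAbove (fun S => w (insert i S)) R = 0 := by
  have huniv : (univ : Finset (Finset α)) = (insert i (univ.erase i)).powerset := by
    rw [insert_erase (mem_univ i), powerset_univ]
  rw [altSumAbove, sum_filter, huniv, sum_powerset_insert (notMem_erase i univ), ← sum_add_distrib]
  refine sum_eq_zero fun S hS => ?_
  have hiS : i ∉ S := fun h => notMem_erase i univ (mem_powerset.mp hS h)
  simp only [subset_insert_iff_of_notMem hi, insert_idem, card_insert_of_notMem hiS, pow_succ]
  split_ifs <;> ring

lemma altSumAbove_sub (w w' : Finset α → M) (R : Finset α) :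
    altSumAbove (fun S => w S - w' S) R = altSumAbove w R - altSumAbove w' R := by
  simp only [altSumAbove, mul_sub, sum_sub_distrib]

lemma sum_sum_powerset_comm (F : Finset α → Finset α → M) :
    ∑ S, ∑ R ∈ S.powerset, F S R = ∑ R, ∑ S with R ⊆ S, F S R :=
  sum_comm' fun S R => by simp only [mem_univ, mem_powerset, mem_filter, true_and, and_true]

lemma sum_neg_one_pow_card_mul_sum_powerset (a w : Finset α → M) :
    ∑ S, (-1) ^ #S * ∑ R ∈ S.powerset, a R * w S = ∑ R, a R * altSumAbove w R := by
  simp only [altSumAbove, mul_sum]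
  rw [sum_sum_powerset_comm]
  exact sum_congr rfl fun R _ => sum_congr rfl fun S _ => by ring

end Alternating

lemma dHess_eq {m : ℕ} (v : Finset (Fin m) → ℝ) (S : Finset (Fin m)) (i j : Fin m) :
    dHess v S i j = (v (insert i (insert j S)) - v (insert j S)) - (v (insert i S) - v S) := by
  simp only [dHess, union_insert, union_singleton]
  ring

lemma altSumAbove_dHess {m : ℕ} (v : Finset (Fin m) → ℝ) (R : Finset (Fin m)) (i j : Fin m) :
    altSumAbove (fun S => dHess v S i j) R = if i ∈ R ∨ j ∈ R then 0 else altSumAbove v R := by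
  split_ifs with h
  · refine sum_eq_zero fun S hS => ?_
    have hRS : R ⊆ S := (mem_filter.mp hS).2
    dsimp only
    rcases h with h | h
    · rw [dHess_eq, insert_eq_self.mpr (hRS h), insert_eq_self.mpr (mem_insert_of_mem (hRS h))]
      ring
    · rw [dHess_eq, insert_eq_self.mpr (hRS h), sub_self, mul_zero]
  · rw [not_or] at h
    simp only [dHess_eq]
    rw [altSumAbove_sub, altSumAbove_sub, altSumAbove_sub,
      altSumAbove_insert h.2 (fun T => v (insert i T)), altSumAbove_insert h.2 v,
      altSumAbove_insert h.1 v]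
    ring

section Lottery

variable {m : ℕ} (k : ℕ)

noncomputable def lotWithin (R : Finset (Fin m)) (x : Fin m → ℝ) : ℝ :=
  1 - (∑ j ∈ Rᶜ, x j) / k

lemma lotWithin_eq_sum_lotW (R : Finset (Fin m)) (x : Fin m → ℝ) :
    lotWithin k R x = ∑ o : Option (Fin m), if ∀ j ∈ o, j ∈ R then lotW k x o else 0 := by
  simp only [lotWithin, Option.mem_def, lotW, Fintype.sum_option, reduceCtorEq,
    IsEmpty.forall_iff, implies_true, ↓reduceIte, Option.some.injEq, forall_eq', sum_ite_mem,
    univ_inter]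
  rw [← sum_div, ← sum_compl_add_sum R x]
  ring

lemma lotProj_subset_iff {t : ℕ} (f : Fin t → Option (Fin m)) (R : Finset (Fin m)) :
    lotProj f ⊆ R ↔ ∀ s, ∀ j ∈ f s, j ∈ R := by
  simp only [lotProj, subset_iff, mem_filter, mem_univ, true_and, Option.mem_def]
  exact ⟨fun h s j hj => h ⟨s, hj⟩, fun h j ⟨s, hs⟩ => h s j hs⟩

lemma sum_lotP_of_lotProj_subset (t : ℕ) (R : Finset (Fin m)) (x : Fin m → ℝ) :
    ∑ f : Fin t → Option (Fin m) with lotProj f ⊆ R, lotP k t x f = lotWithin k R x ^ t := by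
  rw [lotWithin_eq_sum_lotW, ← Fin.prod_const, Fintype.prod_sum, sum_filter]
  refine sum_congr rfl fun f _ => ?_
  simp only [Fintype.prod_ite_zero, lotP, lotProj_subset_iff]
  congr

lemma lotG_eq_sum_altSumAbove (v : Finset (Fin m) → ℝ) (x : Fin m → ℝ) :
    lotG k v x = ∑ R, (-1) ^ #R * altSumAbove v R * lotWithin k R x ^ k := by
  simp only [lotG, ← sum_neg_one_pow_card_mul_altSumAbove v (lotProj _), mul_sum, sum_filter,
    ← sum_lotP_of_lotProj_subset]
  rw [sum_comm]
  exact sum_congr rfl fun R _ => sum_congr rfl fun f _ => by split_ifs <;> ring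

lemma hasDerivAt_lotWithin_update (R : Finset (Fin m)) (x : Fin m → ℝ) (j : Fin m) :
    HasDerivAt (fun t => lotWithin k R (Function.update x j t)) (if j ∈ R then 0 else -1 / k)
      (x j) := by
  split_ifs with hj
  · simp only [lotWithin, sum_update_of_notMem (notMem_compl.mpr hj)]
    exact hasDerivAt_const _ _
  · simp only [lotWithin, sum_update_of_mem (mem_compl.mpr hj)]
    exact ((((hasDerivAt_id' (x j)).add_const (∑ i ∈ Rᶜ \ {j}, x i)).div_const
      (k : ℝ)).const_sub 1).congr_deriv (by ring)

lemma pd_sum_mul_lotWithin_pow (c : Finset (Fin m) → ℝ) (n : ℕ) (j : Fin m) :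
    pd j (fun y => ∑ R, c R * lotWithin k R y ^ (n + 1))
      = fun y => ∑ R, (if j ∈ R then 0 else -((n + 1) / k) * c R) * lotWithin k R y ^ n := by
  funext y
  refine (HasDerivAt.fun_sum fun R _ => ?_).deriv
  refine (((hasDerivAt_lotWithin_update k R y j).fun_pow (n + 1)).const_mul (c R)).congr_deriv ?_
  rw [Function.update_eq_self]
  split_ifs <;> push_cast <;> ring

end Lottery

theorem stmt10_general (m k : ℕ) (hk : 2 ≤ k) (v : Finset (Fin m) → ℝ)
    (x : Fin m → ℝ) (i j : Fin m) :
    pd i (pd j (lotG k v)) x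
      = ((k : ℝ) - 1) / k *
          ∑ S : Finset (Fin m), (-1 : ℝ) ^ S.card *
            ∑ R ∈ S.powerset,
              (-1 : ℝ) ^ R.card * (1 - (∑ j' ∈ Rᶜ, x j') / k) ^ (k - 2) *
                dHess v S i j := by
  obtain ⟨n, rfl⟩ : ∃ n, k = n + 2 := ⟨k - 2, by omega⟩
  have hG : lotG (n + 2) v
      = fun y => ∑ R, (-1) ^ #R * altSumAbove v R * lotWithin (n + 2) R y ^ (n + 1 + 1) :=
    funext (lotG_eq_sum_altSumAbove _ v)
  rw [hG, pd_sum_mul_lotWithin_pow, pd_sum_mul_lotWithin_pow, Nat.add_sub_cancel,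
    sum_neg_one_pow_card_mul_sum_powerset, mul_sum]
  refine sum_congr rfl fun R _ => ?_
  rw [altSumAbove_dHess, lotWithin]
  by_cases hij : i ∈ R ∨ j ∈ R
  · rcases hij with h | h <;> simp [h]
  · obtain ⟨hi, hj⟩ := not_or.mp hij
    have hk0 : (n : ℝ) + 2 ≠ 0 := by positivity
    rw [if_neg hij, if_neg hi, if_neg hj]
    push_cast
    field_simp
    ring

theorem stmt10 (m k : ℕ) (hm : 1 ≤ m) (hk : 2 ≤ k) (v : Finset (Fin m) → ℝ)
    (x : Fin m → ℝ) (i j : Fin m) :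
    pd i (pd j (lotG k v)) x
      = ((k : ℝ) - 1) / k *
          ∑ S : Finset (Fin m), (-1 : ℝ) ^ S.card *
            ∑ R ∈ S.powerset,
              (-1 : ℝ) ^ R.card * (1 - (∑ j' ∈ Rᶜ, x j') / k) ^ (k - 2) *
                dHess v S i j :=
  stmt10_general m k hk v x i j
end
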